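/- Let N ≥ 2 be an integer and let β ∈ ℝ satisfy −1/(4(N−1)) ≤ β ≤ 0. Then for all real numbers τ, r with 0 < τ ≤ r, one has G(τ, r) ≥ 0, where G is defined as in the context. -/
import Mathlib


open intervalIntegral

/-- `G₁(τ,s) = ∫_τ^s τ^{N−1}/u^{N−1} du`. -/
noncomputable def G₁ (N : ℕ) (τ s : ℝ) : ℝ :=
  ∫ u in τ..s, (τ : ℝ) ^ (N - 1) / u ^ (N - 1)

/-- `H₁(τ,s) = τ (s^N − τ^N)/N`. -/
noncomputable def H₁ (N : ℕ) (τ s : ℝ) : ℝ := τ * (s ^ N - τ ^ N) / N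

/-- `G₂(τ,s) = ∫_τ^s u^{N−1} G₁(τ,u) du`. -/
noncomputable def G₂ (N : ℕ) (τ s : ℝ) : ℝ :=
  ∫ u in τ..s, u ^ (N - 1) * G₁ N τ u

/-- `G(τ,r) = −β ∫_τ^r H₁(τ,s) s^{1−N} ds
      + ((4(N−1)β+1)/4) ∫_τ^r G₂(τ,s) s^{1−N} ds`. -/
noncomputable def G (N : ℕ) (β τ r : ℝ) : ℝ :=
  -β * (∫ s in τ..r, H₁ N τ s * s ^ ((1 : ℤ) - N))
    + ((4 * ((N : ℝ) - 1) * β + 1) / 4)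
      * ∫ s in τ..r, G₂ N τ s * s ^ ((1 : ℤ) - N)

/-- nonnegativity of the kernel `G` when
`−1/(4(N−1)) ≤ β ≤ 0` and `N ≥ 2`. -/
theorem stmt_10 (N : ℕ) (hN : 2 ≤ N) (β : ℝ)
    (hβ₁ : -(1 / (4 * ((N : ℝ) - 1))) ≤ β) (hβ₂ : β ≤ 0) :
    ∀ τ r : ℝ, 0 < τ → τ ≤ r → 0 ≤ G N β τ r := by
  intro τ r hτ hτr
  have hNpos : (0:ℝ) < (N:ℝ) - 1 := by
    have : (2:ℝ) ≤ (N:ℝ) := by exact_mod_cast hN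
    linarith
  have hG₁ : ∀ u : ℝ, τ ≤ u → 0 ≤ G₁ N τ u := by
    intro u hu
    apply intervalIntegral.integral_nonneg hu
    intro x hx
    have hx0 : 0 < x := lt_of_lt_of_le hτ hx.1
    positivity
  have hG₂ : ∀ s : ℝ, τ ≤ s → 0 ≤ G₂ N τ s := by
    intro s hs
    apply intervalIntegral.integral_nonneg hs
    intro x hx
    have hx0 : 0 < x := lt_of_lt_of_le hτ hx.1
    exact mul_nonneg (by positivity) (hG₁ x hx.1)
  have hI₁ : 0 ≤ ∫ s in τ..r, H₁ N τ s * s ^ ((1 : ℤ) - N) := by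
    apply intervalIntegral.integral_nonneg hτr
    intro x hx
    have hx0 : 0 < x := lt_of_lt_of_le hτ hx.1
    have hH : 0 ≤ H₁ N τ x := by
      have hpow : τ ^ N ≤ x ^ N := pow_le_pow_left₀ hτ.le hx.1 N
      have : (0:ℝ) < N := by positivity
      unfold H₁
      apply div_nonneg _ this.le
      exact mul_nonneg hτ.le (by linarith)
    exact mul_nonneg hH (zpow_nonneg hx0.le _)
  have hI₂ : 0 ≤ ∫ s in τ..r, G₂ N τ s * s ^ ((1 : ℤ) - N) := by
    apply intervalIntegral.integral_nonneg hτr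
    intro x hx
    have hx0 : 0 < x := lt_of_lt_of_le hτ hx.1
    exact mul_nonneg (hG₂ x hx.1) (zpow_nonneg hx0.le _)
  have hc₁ : 0 ≤ -β := by linarith
  have hc₂ : 0 ≤ (4 * ((N : ℝ) - 1) * β + 1) / 4 := by
    have h4 : (0:ℝ) < 4 * ((N:ℝ) - 1) := by linarith
    have key := mul_le_mul_of_nonneg_right hβ₁ h4.le
    have heq : -(1 / (4 * ((N:ℝ) - 1))) * (4 * ((N:ℝ) - 1)) = -1 := by
      field_simp
    rw [heq] at key
    nlinarith [key]
  unfold G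
  have := add_nonneg (mul_nonneg hc₁ hI₁) (mul_nonneg hc₂ hI₂)
  linarith
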